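/- arXiv:2402.03126 — 3 statements merged into one kernel-verified Lean document; each statement's English description precedes it below -/
import Mathlib

section
/- For nonnegative reals a_1,…,a_n, the sum over i of a_i / sqrt(a_1 + … + a_i) is at most 2·sqrt(a_1 + … + a_n), where terms with zero denominator are interpreted as 0. -/
lemma key_step (T a : ℝ) (hT : 0 ≤ T) (ha : 0 ≤ a) :
    a / Real.sqrt (T + a) ≤ 2 * Real.sqrt (T + a) - 2 * Real.sqrt T := by
  rcases eq_or_lt_of_le (by linarith : (0:ℝ) ≤ T + a) with h | h
  · have ha0 : a = 0 := by linarith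
    have hT0 : T = 0 := by linarith
    simp [ha0, hT0]
  · have hs : 0 < Real.sqrt (T + a) := Real.sqrt_pos.mpr h
    rw [div_le_iff₀ hs]
    have h1 : Real.sqrt T ≤ Real.sqrt (T + a) := Real.sqrt_le_sqrt (by linarith)
    have h2 : Real.sqrt (T + a) ^ 2 = T + a := Real.sq_sqrt (by linarith)
    have h3 : Real.sqrt T ^ 2 = T := Real.sq_sqrt hT
    nlinarith [Real.sqrt_nonneg T]

/-- For nonnegative reals `a 1, …, a n`, `∑ i, a i / √(a 1 + ⋯ + a i) ≤ 2 √(a 1 + ⋯ + a n)`,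
with the convention `0/0 = 0` (automatic in Lean since division by zero is zero). -/
theorem sum_div_sqrt_partial_sum_le (n : ℕ) (a : ℕ → ℝ) (ha : ∀ i, 0 ≤ a i) :
    ∑ i ∈ Finset.Icc 1 n, a i / Real.sqrt (∑ j ∈ Finset.Icc 1 i, a j)
      ≤ 2 * Real.sqrt (∑ i ∈ Finset.Icc 1 n, a i) := by
  induction n with
  | zero => simp
  | succ n ih =>
    have hIcc : ∀ m : ℕ, Finset.Icc 1 (m + 1) = insert (m + 1) (Finset.Icc 1 m) := by
      intro m
      ext x; simp [Finset.mem_Icc]; omega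
    have hnot : (n + 1) ∉ Finset.Icc 1 n := by simp
    rw [hIcc n, Finset.sum_insert hnot, Finset.sum_insert hnot]
    have hT : 0 ≤ ∑ j ∈ Finset.Icc 1 n, a j := Finset.sum_nonneg fun i _ => ha i
    have hkey := key_step (∑ j ∈ Finset.Icc 1 n, a j) (a (n + 1)) hT (ha (n + 1))
    have hrw : (∑ j ∈ Finset.Icc 1 (n + 1), a j)
        = (∑ j ∈ Finset.Icc 1 n, a j) + a (n + 1) := by
      rw [hIcc n, Finset.sum_insert hnot]; ring
    rw [hrw, add_comm (a (n+1))]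
    linarith
end

section
/- Let G_t = sqrt(Σ_{s=1}^t ‖g_s‖²), σ > 0, and define η_s = αD/sqrt(σ² + G_s²) and η̃_s = αD/sqrt(σ² + ‖∇f(w_s)‖² + G_{s-1}²). Then |η̃_s − η_s| · ‖g_s‖ ≤ (1/(αD))·η_s·η̃_s·‖g_s − ∇f(w_s)‖·‖g_s‖. -/
open Finset

/-!
Both stepsizes have the form `αD / √(x + t²)` with the same `x = σ² + G_{s-1}²` and
`t = ‖g_s‖`, resp. `‖∇f(w_s)‖`. A difference of such reciprocals is `1/(αD)` times their product
times the difference of the square roots, and `t ↦ √(x + t²)` is 1-Lipschitz, so the latter is at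
most `|‖g_s‖ - ‖∇f(w_s)‖| ≤ ‖g_s - ∇f(w_s)‖`.
-/

lemma Real.sqrt_add_sq_le_sqrt_add_sq_add_abs_sub {x : ℝ} (hx : 0 ≤ x) (p q : ℝ) :
    √(x + p ^ 2) ≤ √(x + q ^ 2) + |p - q| := by
  have hq : |q| ≤ √(x + q ^ 2) := Real.abs_le_sqrt (by linarith)
  rw [Real.sqrt_le_iff]
  refine ⟨by positivity, ?_⟩
  have hcross : (p - q) * q ≤ |p - q| * √(x + q ^ 2) :=
    (le_abs_self _).trans (abs_mul (p - q) q ▸ mul_le_mul_of_nonneg_left hq (abs_nonneg _))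
  nlinarith [Real.sq_sqrt (show 0 ≤ x + q ^ 2 by positivity), sq_abs (p - q)]

lemma abs_sqrt_add_norm_sq_sub_le {E : Type*} [SeminormedAddCommGroup E] {x : ℝ} (hx : 0 ≤ x)
    (u v : E) : |√(x + ‖u‖ ^ 2) - √(x + ‖v‖ ^ 2)| ≤ ‖u - v‖ := by
  have hp := Real.sqrt_add_sq_le_sqrt_add_sq_add_abs_sub hx ‖u‖ ‖v‖
  have hq := Real.sqrt_add_sq_le_sqrt_add_sq_add_abs_sub hx ‖v‖ ‖u‖
  rw [abs_sub_comm ‖v‖] at hq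
  exact (abs_sub_le_iff.2 ⟨by linarith, by linarith⟩).trans (abs_norm_sub_norm_le u v)

lemma div_sub_div_eq_inv_mul_div_mul_div {c a b : ℝ} (hc : c ≠ 0) (ha : a ≠ 0) (hb : b ≠ 0) :
    c / b - c / a = 1 / c * (c / a) * (c / b) * (a - b) := by
  field_simp

lemma abs_div_sqrt_add_norm_sq_sub_le {E : Type*} [SeminormedAddCommGroup E] {c x : ℝ}
    (hc : 0 < c) (hx : 0 < x) (u v : E) :
    |c / √(x + ‖v‖ ^ 2) - c / √(x + ‖u‖ ^ 2)| ≤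
      1 / c * (c / √(x + ‖u‖ ^ 2)) * (c / √(x + ‖v‖ ^ 2)) * ‖u - v‖ := by
  have hu : 0 < √(x + ‖u‖ ^ 2) := Real.sqrt_pos.2 (by positivity)
  have hv : 0 < √(x + ‖v‖ ^ 2) := Real.sqrt_pos.2 (by positivity)
  rw [div_sub_div_eq_inv_mul_div_mul_div hc.ne' hu.ne' hv.ne', abs_mul,
    abs_of_nonneg (by positivity)]
  gcongr
  exact abs_sqrt_add_norm_sq_sub_le hx.le u v

/-- Bound on the difference between the AdaGrad stepsize `η_s` and its decorrelated
version `η̃_s`: `|η̃_s − η_s| ‖g_s‖ ≤ (1/(αD)) η_s η̃_s ‖g_s − ∇f(w_s)‖ ‖g_s‖`. -/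
theorem stepsize_decorrelation_bound {d : ℕ}
    (α D σ : ℝ) (hα : 0 < α) (hD : 0 < D) (hσ : 0 < σ)
    (g h : ℕ → EuclideanSpace ℝ (Fin d)) (s : ℕ) (hs : 1 ≤ s) :
    let ηs : ℝ := α * D / Real.sqrt (σ ^ 2 + ∑ i ∈ Finset.Icc 1 s, ‖g i‖ ^ 2)
    let ηts : ℝ :=
      α * D / Real.sqrt (σ ^ 2 + ‖h s‖ ^ 2 + ∑ i ∈ Finset.Icc 1 (s - 1), ‖g i‖ ^ 2)
    |ηts - ηs| * ‖g s‖ ≤ (1 / (α * D)) * ηs * ηts * ‖g s - h s‖ * ‖g s‖ := by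
  intro ηs ηts
  set x := σ ^ 2 + ∑ i ∈ Icc 1 (s - 1), ‖g i‖ ^ 2
  have hx : 0 < x := by positivity
  have hηs : ηs = α * D / √(x + ‖g s‖ ^ 2) := by
    obtain ⟨k, rfl⟩ := Nat.exists_eq_add_of_le' hs
    simp only [ηs, x, Nat.add_sub_cancel, sum_Icc_succ_top (Nat.le_add_left 1 k), add_assoc]
  have hηts : ηts = α * D / √(x + ‖h s‖ ^ 2) := by
    simp only [ηts, x, add_right_comm _ (‖h s‖ ^ 2)]
  rw [hηs, hηts]
  gcongr
  exact abs_div_sqrt_add_norm_sq_sub_le (by positivity) hx (g s) (h s)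
end

section
/- Let σ > 0 and g_1,…,g_T, h_1,…,h_T ∈ ℝ^d with ‖g_s − h_s‖ ≤ σ for all s, and suppose for each t that Σ_{s=1}^{t-1} ‖g_s‖² ≥ Σ_{s=1}^{t-1} ‖g_s − h_s‖² − 3σ²L for a constant L ≥ 1 with γ² = 5σ²L. Then αD/sqrt(γ² + Σ_{s<t}‖g_s‖²) ≤ αD/sqrt(σ² + Σ_{s≤t}‖g_s − h_s‖²), and consequently Σ_{t=1}^T (αD)²·‖g_t − h_t‖²/(γ² + Σ_{s<t}‖g_s‖²) ≤ α²D²·log₂(1 + T). -/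
/-!
Since every noise term is at most `σ²`, the empirical lower bound on `∑_{s<t} ‖g_s‖²`
shows that the decorrelated denominator `γ² + ∑_{s<t} ‖g_s‖²` dominates the noise denominator
`σ² + ∑_{s≤t} ‖g_s - h_s‖²`. This gives the stepsize comparison and reduces the weighted sum
to `∑ a_t / (σ² + ∑_{s≤t} a_s)`, which telescopes against `log` via
`x / (b + x) ≤ log (b + x) - log b`; finally `∑ a_t ≤ Tσ²` bounds the resulting logarithm
by `log (1 + T)`.
-/

open Finset Real

lemma div_add_le_log_sub_log {b x : ℝ} (hb : 0 < b) (hx : 0 ≤ x) :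
    x / (b + x) ≤ log (b + x) - log b := by
  have hbx : 0 < b + x := by linarith
  have key := one_sub_inv_le_log_of_pos (div_pos hbx hb)
  rw [log_div hbx.ne' hb.ne', inv_div] at key
  calc x / (b + x) = 1 - b / (b + x) := by field_simp; ring
    _ ≤ log (b + x) - log b := key

lemma sum_div_add_partialSum_le_log_sub_log {a : ℕ → ℝ} (ha : ∀ t, 0 ≤ a t) {c : ℝ}
    (hc : 0 < c) (T : ℕ) :
    ∑ t ∈ Icc 1 T, a t / (c + ∑ s ∈ Icc 1 t, a s)
      ≤ log (c + ∑ t ∈ Icc 1 T, a t) - log c := by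
  induction T with
  | zero => simp
  | succ n ih =>
    have hS : 0 < c + ∑ s ∈ Icc 1 n, a s :=
      add_pos_of_pos_of_nonneg hc (sum_nonneg fun s _ => ha s)
    have step := div_add_le_log_sub_log hS (ha (n + 1))
    rw [sum_Icc_succ_top (by omega), sum_Icc_succ_top (by omega), ← add_assoc]
    linarith

lemma sum_div_add_partialSum_le_log_one_add {a : ℕ → ℝ} {c : ℝ} (hc : 0 < c)
    (ha : ∀ t, 0 ≤ a t) (hac : ∀ t, a t ≤ c) (T : ℕ) :
    ∑ t ∈ Icc 1 T, a t / (c + ∑ s ∈ Icc 1 t, a s) ≤ log (1 + T) := by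
  have hsum : ∑ t ∈ Icc 1 T, a t ≤ T * c := by
    simpa using sum_le_sum fun t (_ : t ∈ Icc 1 T) => hac t
  have hpos : 0 < c + ∑ t ∈ Icc 1 T, a t :=
    add_pos_of_pos_of_nonneg hc (sum_nonneg fun t _ => ha t)
  calc ∑ t ∈ Icc 1 T, a t / (c + ∑ s ∈ Icc 1 t, a s)
      ≤ log (c + ∑ t ∈ Icc 1 T, a t) - log c := sum_div_add_partialSum_le_log_sub_log ha hc T
    _ ≤ log (c * (1 + T)) - log c := by gcongr; linarith
    _ = log (1 + T) := by rw [log_mul hc.ne' (by positivity)]; ring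

lemma log_le_logb_of_le_exp_one {b x : ℝ} (hb : 1 < b) (hbe : b ≤ exp 1) (hx : 1 ≤ x) :
    log x ≤ logb b x := by
  have hlogb : 0 < log b := log_pos hb
  have hlogb_le : log b ≤ 1 := (log_le_iff_le_exp (by linarith)).2 hbe
  rw [logb, le_div_iff₀ hlogb]
  exact mul_le_of_le_one_right (log_nonneg hx) hlogb_le

lemma noise_denominator_le_decorrelated_denominator {a b : ℕ → ℝ} {σ L : ℝ} (hL : 1 ≤ L)
    (haσ : ∀ s, a s ≤ σ ^ 2)
    {t : ℕ} (ht : 1 ≤ t)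
    (hemp : ∑ s ∈ Icc 1 (t - 1), a s - 3 * σ ^ 2 * L ≤ ∑ s ∈ Icc 1 (t - 1), b s) :
    σ ^ 2 + ∑ s ∈ Icc 1 t, a s ≤ 5 * σ ^ 2 * L + ∑ s ∈ Icc 1 (t - 1), b s := by
  obtain ⟨n, rfl⟩ := Nat.exists_eq_add_of_le' ht
  rw [Nat.add_sub_cancel] at hemp ⊢
  rw [sum_Icc_succ_top (by omega)]
  have hσL : σ ^ 2 ≤ σ ^ 2 * L := le_mul_of_one_le_right (sq_nonneg σ) hL
  linarith [haσ (n + 1)]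

/-- With `γ² = 5σ²L` and the empirical lower bound on `∑‖g‖²`, the decorrelated stepsize is
dominated by a noise-based stepsize, and the weighted sum of squared noises is at most
`α²D² log₂(1+T)`. -/
theorem decorrelated_stepsize_log_bound {d : ℕ}
    (α D σ L : ℝ) (hα : 0 < α) (hD : 0 < D) (hσ : 0 < σ) (hL : 1 ≤ L)
    (T : ℕ) (g h : ℕ → EuclideanSpace ℝ (Fin d))
    (hnoise : ∀ s, ‖g s - h s‖ ≤ σ)
    (hemp : ∀ t, ∑ s ∈ Finset.Icc 1 (t - 1), ‖g s - h s‖ ^ 2 - 3 * σ ^ 2 * L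
        ≤ ∑ s ∈ Finset.Icc 1 (t - 1), ‖g s‖ ^ 2) :
    (∀ t ∈ Finset.Icc 1 T,
        α * D / Real.sqrt (5 * σ ^ 2 * L + ∑ s ∈ Finset.Icc 1 (t - 1), ‖g s‖ ^ 2)
          ≤ α * D / Real.sqrt (σ ^ 2 + ∑ s ∈ Finset.Icc 1 t, ‖g s - h s‖ ^ 2))
    ∧ ∑ t ∈ Finset.Icc 1 T,
        (α * D) ^ 2 * ‖g t - h t‖ ^ 2
          / (5 * σ ^ 2 * L + ∑ s ∈ Finset.Icc 1 (t - 1), ‖g s‖ ^ 2)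
        ≤ α ^ 2 * D ^ 2 * Real.logb 2 (1 + T) := by
  have haσ : ∀ s, ‖g s - h s‖ ^ 2 ≤ σ ^ 2 := fun s =>
    pow_le_pow_left₀ (norm_nonneg _) (hnoise s) 2
  have hden : ∀ t ∈ Icc 1 T, σ ^ 2 + ∑ s ∈ Icc 1 t, ‖g s - h s‖ ^ 2
      ≤ 5 * σ ^ 2 * L + ∑ s ∈ Icc 1 (t - 1), ‖g s‖ ^ 2 := fun t ht =>
    noise_denominator_le_decorrelated_denominator hL haσ (mem_Icc.1 ht).1 (hemp t)
  have hpos : ∀ t, 0 < σ ^ 2 + ∑ s ∈ Icc 1 t, ‖g s - h s‖ ^ 2 := fun t => by positivity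
  refine ⟨fun t ht => div_le_div_of_nonneg_left (by positivity) (sqrt_pos.2 (hpos t))
    (sqrt_le_sqrt (hden t ht)), ?_⟩
  calc ∑ t ∈ Icc 1 T, (α * D) ^ 2 * ‖g t - h t‖ ^ 2
        / (5 * σ ^ 2 * L + ∑ s ∈ Icc 1 (t - 1), ‖g s‖ ^ 2)
      ≤ ∑ t ∈ Icc 1 T, (α * D) ^ 2 * (‖g t - h t‖ ^ 2
        / (σ ^ 2 + ∑ s ∈ Icc 1 t, ‖g s - h s‖ ^ 2)) := sum_le_sum fun t ht => by
          rw [← mul_div_assoc]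
          exact div_le_div_of_nonneg_left (by positivity) (hpos t) (hden t ht)
    _ ≤ (α * D) ^ 2 * logb 2 (1 + T) := by
      rw [← mul_sum]
      gcongr
      have h2e : (2 : ℝ) ≤ exp 1 := by linarith [add_one_le_exp (1 : ℝ)]
      calc ∑ t ∈ Icc 1 T, ‖g t - h t‖ ^ 2 / (σ ^ 2 + ∑ s ∈ Icc 1 t, ‖g s - h s‖ ^ 2)
          ≤ log (1 + T) :=
            sum_div_add_partialSum_le_log_one_add (by positivity) (fun _ => by positivity) haσ T
        _ ≤ logb 2 (1 + T) := log_le_logb_of_le_exp_one one_lt_two h2e (by simp)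
    _ = α ^ 2 * D ^ 2 * logb 2 (1 + T) := by ring
end
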